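/- arXiv:2006.13629 — 3 statements merged into one kernel-verified Lean document; each statement's English description precedes it below -/
import Mathlib

section
/- Let p_S, p_T be joint distributions of (Z, Y) with Y in the probability simplex of ℝ^C, let w : Z → ℝ₊ satisfy w(z) p_S(z) = p_T(z) (as marginals on Z). Let f_S(z) = E_S[Y|Z=z] and f_T(z) = E_T[Y|Z=z], both in a symmetric convex class F_C with (f_S−f_T)/2 ∈ F_C. If TSF(w) := sup_{f∈F_C} ( E_T[Y·f(Z)] − E_S[w(Z) Y·f(Z)] ) = 0, then f_S = f_T holds p_T-almost surely, i.e. E_T[Y|Z=z] = E_S[Y|Z=z] for p_T-almost every z. -/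
/-! Under the tower property on both domains and the change of measure `w p_S = p_T`, the
transferability gap of any critic `f` collapses to `E_T[(f_T - f_S) · f]`. Evaluating it at the
critic `-(f_S - f_T)/2`, which lies in the class by symmetry, gives
`½ E_T[‖f_S - f_T‖²] ≤ TSF(w) = 0`, so `f_S = f_T` holds `p_T`-almost surely. -/

open MeasureTheory

lemma abs_sub_apply_le {Z ι : Type*} {a b : Z → ι → ℝ} {M N : ℝ}
    (haM : ∀ z c, |a z c| ≤ M) (hbN : ∀ z c, |b z c| ≤ N) :
    ∀ z c, |(a - b) z c| ≤ M + N :=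
  fun z c => (abs_sub _ _).trans (add_le_add (haM z c) (hbN z c))

section BoundedFields

variable {Z ι : Type*} [MeasurableSpace Z] [Fintype ι]

lemma abs_sum_mul_le_card_mul {a b : ι → ℝ} {M N : ℝ}
    (ha : ∀ c, |a c| ≤ M) (hb : ∀ c, |b c| ≤ N) :
    |∑ c, a c * b c| ≤ Fintype.card ι * (M * N) :=
  calc |∑ c, a c * b c| ≤ ∑ c, |a c * b c| := Finset.abs_sum_le_sum_abs _ _
    _ ≤ ∑ _c : ι, M * N := Finset.sum_le_sum fun c _ => by
        rw [abs_mul]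
        exact mul_le_mul (ha c) (hb c) (abs_nonneg _) ((abs_nonneg _).trans (ha c))
    _ = Fintype.card ι * (M * N) := by simp

lemma sum_sub_mul_neg_half_mul_sub (a b : ι → ℝ) :
    ∑ c, (b c - a c) * -(2⁻¹ * (a c - b c)) = 2⁻¹ * ∑ c, (a c - b c) * (a c - b c) := by
  rw [Finset.mul_sum]
  exact Finset.sum_congr rfl fun c _ => by ring

lemma integrable_sum_mul {μ : Measure Z} [IsFiniteMeasure μ] {a b : Z → ι → ℝ} {M N : ℝ}
    (ha : Measurable a) (hb : Measurable b)
    (haM : ∀ z c, |a z c| ≤ M) (hbN : ∀ z c, |b z c| ≤ N) :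
    Integrable (fun z => ∑ c, a z c * b z c) μ :=
  Integrable.of_bound (by fun_prop) _
    (Filter.Eventually.of_forall fun z => abs_sum_mul_le_card_mul (haM z) (hbN z))

lemma abs_integral_sum_mul_le {μ : Measure Z} [IsFiniteMeasure μ] {a b : Z → ι → ℝ} {M N : ℝ}
    (haM : ∀ z c, |a z c| ≤ M) (hbN : ∀ z c, |b z c| ≤ N) :
    |∫ z, ∑ c, a z c * b z c ∂μ| ≤ Fintype.card ι * (M * N) * μ.real Set.univ :=
  norm_integral_le_of_norm_le_const (f := fun z => ∑ c, a z c * b z c) <|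
    ae_of_all _ fun z => abs_sum_mul_le_card_mul (haM z) (hbN z)

lemma integral_comp_fst_sum_mul {Y : Type*} [MeasurableSpace Y] {μ : Measure (Z × Y)}
    {a b : Z → ι → ℝ} (ha : Measurable a) (hb : Measurable b) :
    ∫ p, ∑ c, a p.1 c * b p.1 c ∂μ = ∫ z, ∑ c, a z c * b z c ∂(μ.map Prod.fst) :=
  (integral_map (f := fun z => ∑ c, a z c * b z c) measurable_fst.aemeasurable
    (by fun_prop)).symm

lemma ae_eq_zero_of_integral_sum_mul_self_nonpos {μ : Measure Z} [IsFiniteMeasure μ]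
    {d : Z → ι → ℝ} {M : ℝ} (hd : Measurable d) (hdM : ∀ z c, |d z c| ≤ M)
    (hint : ∫ z, ∑ c, d z c * d z c ∂μ ≤ 0) :
    ∀ᵐ z ∂μ, d z = 0 := by
  have hnonneg : 0 ≤ fun z => ∑ c, d z c * d z c :=
    fun z => Finset.sum_nonneg fun c _ => mul_self_nonneg _
  have hzero : (fun z => ∑ c, d z c * d z c) =ᵐ[μ] 0 :=
    (integral_eq_zero_iff_of_nonneg hnonneg (integrable_sum_mul hd hd hdM hdM)).mp
      (le_antisymm hint (integral_nonneg hnonneg))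
  filter_upwards [hzero] with z hz
  funext c
  exact mul_self_eq_zero.mp <| congr_fun
    ((Fintype.sum_eq_zero_iff_of_nonneg fun c => mul_self_nonneg (d z c)).mp hz) c

lemma integral_sub_weighted_eq_integral_sum_mul
    {μS μT : Measure (Z × (ι → ℝ))} [IsFiniteMeasure μT] {w : Z → ℝ}
    (hchange : ∀ h : Z → ℝ, Measurable h → (∃ M, ∀ z, |h z| ≤ M) →
      ∫ p, w p.1 * h p.1 ∂μS = ∫ p, h p.1 ∂μT)
    {fS fT f : Z → ι → ℝ} {M N : ℝ}
    (hfS : Measurable fS) (hfT : Measurable fT) (hf : Measurable f)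
    (hfSM : ∀ z c, |fS z c| ≤ M) (hfTM : ∀ z c, |fT z c| ≤ M) (hfN : ∀ z c, |f z c| ≤ N)
    (htowerS : ∫ p, w p.1 * ∑ c, p.2 c * f p.1 c ∂μS =
      ∫ p, w p.1 * ∑ c, fS p.1 c * f p.1 c ∂μS)
    (htowerT : ∫ p, ∑ c, p.2 c * f p.1 c ∂μT = ∫ p, ∑ c, fT p.1 c * f p.1 c ∂μT) :
    (∫ p, ∑ c, p.2 c * f p.1 c ∂μT) - ∫ p, w p.1 * ∑ c, p.2 c * f p.1 c ∂μS =
      ∫ z, ∑ c, (fT - fS) z c * f z c ∂(μT.map Prod.fst) := by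
  have hchangeS := hchange (fun z => ∑ c, fS z c * f z c) (by fun_prop)
    ⟨_, fun z => abs_sum_mul_le_card_mul (hfSM z) (hfN z)⟩
  rw [htowerT, htowerS, hchangeS, integral_comp_fst_sum_mul hfT hf,
    integral_comp_fst_sum_mul hfS hf, ← integral_sub (integrable_sum_mul hfT hf hfTM hfN)
      (integrable_sum_mul hfS hf hfSM hfN)]
  simp only [Pi.sub_apply, sub_mul, Finset.sum_sub_distrib]

end BoundedFields

theorem stmt7_general {Z : Type*} [MeasurableSpace Z] {C : ℕ}
    (μS μT : Measure (Z × (Fin C → ℝ)))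
    [IsProbabilityMeasure μT]
    (w : Z → ℝ)
    (hchange : ∀ h : Z → ℝ, Measurable h → (∃ M, ∀ z, |h z| ≤ M) →
      ∫ p, w p.1 * h p.1 ∂μS = ∫ p, h p.1 ∂μT)
    (FC : Set (Z → Fin C → ℝ))
    (hsym : ∀ f ∈ FC, (fun z => -f z) ∈ FC)
    (hFCmeas : ∀ f ∈ FC, Measurable f)
    (hFCbdd : ∀ f ∈ FC, ∀ z c, |f z c| ≤ 1)
    (fS fT : Z → Fin C → ℝ) (hfSmem : fS ∈ FC) (hfTmem : fT ∈ FC)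
    (hhalf : (fun z => (2 : ℝ)⁻¹ • (fS z - fT z)) ∈ FC)
    (htowerS : ∀ f ∈ FC,
      ∫ p, w p.1 * ∑ c, p.2 c * f p.1 c ∂μS =
        ∫ p, w p.1 * ∑ c, fS p.1 c * f p.1 c ∂μS)
    (htowerT : ∀ f ∈ FC,
      ∫ p, ∑ c, p.2 c * f p.1 c ∂μT = ∫ p, ∑ c, fT p.1 c * f p.1 c ∂μT)
    (hTSF : sSup {x : ℝ | ∃ f ∈ FC,
        x = (∫ p, ∑ c, p.2 c * f p.1 c ∂μT) -
            ∫ p, w p.1 * ∑ c, p.2 c * f p.1 c ∂μS} = 0) :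
    ∀ᵐ z ∂(μT.map Prod.fst), fS z = fT z := by
  have gap : ∀ f ∈ FC, (∫ p, ∑ c, p.2 c * f p.1 c ∂μT) - ∫ p, w p.1 * ∑ c, p.2 c * f p.1 c ∂μS =
      ∫ z, ∑ c, (fT - fS) z c * f z c ∂(μT.map Prod.fst) := fun f hf =>
    integral_sub_weighted_eq_integral_sum_mul hchange (hFCmeas fS hfSmem) (hFCmeas fT hfTmem)
      (hFCmeas f hf) (hFCbdd fS hfSmem) (hFCbdd fT hfTmem) (hFCbdd f hf) (htowerS f hf)
      (htowerT f hf)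
  have hbdd : BddAbove {x : ℝ | ∃ f ∈ FC, x = (∫ p, ∑ c, p.2 c * f p.1 c ∂μT) -
      ∫ p, w p.1 * ∑ c, p.2 c * f p.1 c ∂μS} := by
    refine ⟨Fintype.card (Fin C) * ((1 + 1) * 1) * (μT.map Prod.fst).real Set.univ, ?_⟩
    rintro _ ⟨f, hf, rfl⟩
    rw [gap f hf]
    exact (le_abs_self _).trans
      (abs_integral_sum_mul_le (abs_sub_apply_le (hFCbdd fT hfTmem) (hFCbdd fS hfSmem))
        (hFCbdd f hf))
  have hcritic := hsym _ hhalf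
  have hsq_le : ∫ z, ∑ c, (fS z c - fT z c) * (fS z c - fT z c) ∂(μT.map Prod.fst) ≤ 0 := by
    have hgap_le := gap _ hcritic ▸ hTSF ▸ le_csSup hbdd ⟨_, hcritic, rfl⟩
    simp only [Pi.sub_apply, Pi.neg_apply, Pi.smul_apply, smul_eq_mul,
      sum_sub_mul_neg_half_mul_sub, integral_const_mul] at hgap_le
    linarith
  filter_upwards [ae_eq_zero_of_integral_sum_mul_self_nonpos (d := fS - fT)
    ((hFCmeas fS hfSmem).sub (hFCmeas fT hfTmem))
    (abs_sub_apply_le (hFCbdd fS hfSmem) (hFCbdd fT hfTmem)) hsq_le] with z hz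
  exact sub_eq_zero.mp hz

/-- Nullity of the weighted transferability error implies conservation of the
labelling function across domains (p_T-almost surely). -/
theorem stmt7 {Z : Type*} [MeasurableSpace Z] {C : ℕ}
    (μS μT : Measure (Z × (Fin C → ℝ)))
    [IsProbabilityMeasure μS] [IsProbabilityMeasure μT]
    (w : Z → ℝ) (hwnn : ∀ z, 0 ≤ w z) (hwm : Measurable w)
    (hchange : ∀ h : Z → ℝ, Measurable h → (∃ M, ∀ z, |h z| ≤ M) →
      ∫ p, w p.1 * h p.1 ∂μS = ∫ p, h p.1 ∂μT)
    (FC : Set (Z → Fin C → ℝ))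
    (hsym : ∀ f ∈ FC, (fun z => -f z) ∈ FC)
    (hconv : Convex ℝ FC)
    (hFCmeas : ∀ f ∈ FC, Measurable f)
    (hFCbdd : ∀ f ∈ FC, ∀ z c, |f z c| ≤ 1)
    (fS fT : Z → Fin C → ℝ) (hfSmem : fS ∈ FC) (hfTmem : fT ∈ FC)
    (hhalf : (fun z => (2 : ℝ)⁻¹ • (fS z - fT z)) ∈ FC)
    (htowerS : ∀ f ∈ FC,
      ∫ p, w p.1 * ∑ c, p.2 c * f p.1 c ∂μS =
        ∫ p, w p.1 * ∑ c, fS p.1 c * f p.1 c ∂μS)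
    (htowerT : ∀ f ∈ FC,
      ∫ p, ∑ c, p.2 c * f p.1 c ∂μT = ∫ p, ∑ c, fT p.1 c * f p.1 c ∂μT)
    (hTSF : sSup {x : ℝ | ∃ f ∈ FC,
        x = (∫ p, ∑ c, p.2 c * f p.1 c ∂μT) -
            ∫ p, w p.1 * ∑ c, p.2 c * f p.1 c ∂μS} = 0) :
    ∀ᵐ z ∂(μT.map Prod.fst), fS z = fT z :=
  stmt7_general μS μT w hchange FC hsym hFCmeas hFCbdd fS fT hfSmem hfTmem hhalf htowerS htowerT
    hTSF
end

section
/- MinEnt lower bound: let g be a label-smooth classifier (α/(C−1) ≤ g_c(z) ≤ 1−α for all z, c) and set η = −1/log(α/(C−1)) > 0 and f(z) = −η·log(g(z)) ∈ [0,1]^C. Then for any weight w ≥ 0 with E_S[w(Z)] = 1, the transferability error TSF̂(w, φ, g) = sup_{f'∈F_C}(E_T[g(Z)·f'(Z)] − E_S[w(Z) Y·f'(Z)]) satisfies TSF̂(w,φ,g) ≥ η·( H_T(g) − CE_{w·S}(Y, g) ), where H_T(g) = E_T[−g(Z)·log g(Z)] is the target prediction entropy and CE_{w·S}(Y,g) =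 E_S[−w(Z) Y·log g(Z)] is the weighted source cross-entropy. -/
open MeasureTheory

/-! The critic `f = -η log g` is admissible: label smoothing puts `g` in `[a, 1]` with
`a = α / (C - 1)`, so `η (-log g) = log g / log a ∈ [0, 1]`. Since the objective is linear in
the critic, its value at `f` is `η` times its value at `-log g`, which is `H_T(g) - CE_{w·S}(Y, g)`. -/

theorem Real.log_div_log_mem_Icc {a x : ℝ} (ha : 0 ≤ a) (hax : a ≤ x) (hx : x ≤ 1) :
    Real.log x / Real.log a ∈ Set.Icc 0 1 := by
  rcases ha.eq_or_lt with rfl | ha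
  · simp -- `log 0 = 0`, and division by zero gives `0`
  have hloga : Real.log a ≤ 0 := Real.log_nonpos ha.le (hax.trans hx)
  exact ⟨div_nonneg_of_nonpos (Real.log_nonpos (ha.trans_le hax).le hx) hloga,
    div_le_one_of_ge (Real.log_le_log ha hax) hloga⟩

section TransferObjective

variable {Z ι : Type*} [MeasurableSpace Z] [Fintype ι]

/-- The quantity maximised over critics `f` in the transferability error `TSF̂(w, φ, g)`. -/
noncomputable def transferObjective (μT : Measure Z) (μS : Measure (Z × (ι → ℝ)))
    (g : Z → ι → ℝ) (w : Z → ℝ) (f : Z → ι → ℝ) : ℝ :=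
  (∫ z, ∑ c, g z c * f z c ∂μT) - ∫ p, w p.1 * ∑ c, p.2 c * f p.1 c ∂μS

variable (μT : Measure Z) (μS : Measure (Z × (ι → ℝ))) (g : Z → ι → ℝ) (w : Z → ℝ)

theorem transferObjective_const_mul (η : ℝ) (f : Z → ι → ℝ) :
    transferObjective μT μS g w (fun z c => η * f z c) = η * transferObjective μT μS g w f := by
  simp only [transferObjective, mul_sub, ← integral_const_mul, Finset.mul_sum, mul_left_comm η]

theorem transferObjective_neg_log :
    transferObjective μT μS g w (fun z c => -Real.log (g z c)) =
      (∫ z, -∑ c, g z c * Real.log (g z c) ∂μT) -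
        ∫ p, -(w p.1) * ∑ c, p.2 c * Real.log (g p.1 c) ∂μS := by
  simp only [transferObjective, mul_neg, Finset.sum_neg_distrib, neg_mul]

end TransferObjective

theorem stmt15_general {Z : Type*} [MeasurableSpace Z] {C : ℕ}
    (μS : Measure (Z × (Fin C → ℝ)))
    (μZT : Measure Z)
    (α : ℝ) (hα0 : 0 < α)
    (g : Z → Fin C → ℝ) (hgm : Measurable g)
    (hg : ∀ z c, α / ((C : ℝ) - 1) ≤ g z c ∧ g z c ≤ 1 - α)
    (w : Z → ℝ)
    (η : ℝ) (hη : η = -(Real.log (α / ((C : ℝ) - 1)))⁻¹)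
    (hbdd : BddAbove {x : ℝ | ∃ f : Z → Fin C → ℝ, Measurable f ∧
        (∀ z c, f z c ∈ Set.Icc (0 : ℝ) 1) ∧
        x = (∫ z, ∑ c, g z c * f z c ∂μZT) -
            ∫ p, w p.1 * ∑ c, p.2 c * f p.1 c ∂μS}) :
    η * ((∫ z, -∑ c, g z c * Real.log (g z c) ∂μZT) -
          ∫ p, -(w p.1) * ∑ c, p.2 c * Real.log (g p.1 c) ∂μS) ≤
      sSup {x : ℝ | ∃ f : Z → Fin C → ℝ, Measurable f ∧
        (∀ z c, f z c ∈ Set.Icc (0 : ℝ) 1) ∧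
        x = (∫ z, ∑ c, g z c * f z c ∂μZT) -
            ∫ p, w p.1 * ∑ c, p.2 c * f p.1 c ∂μS} := by
  set a := α / ((C : ℝ) - 1)
  have hη_mul (x : ℝ) : η * -Real.log x = Real.log x / Real.log a := by rw [hη]; ring
  refine le_csSup hbdd ⟨fun z c => η * -Real.log (g z c), ?_, fun z c => ?_, ?_⟩
  · fun_prop
  · have hC : (1 : ℝ) ≤ C := by exact_mod_cast c.pos
    show η * -Real.log (g z c) ∈ _
    rw [hη_mul]
    exact Real.log_div_log_mem_Icc (div_nonneg hα0.le (by linarith)) (hg z c).1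
      ((hg z c).2.trans (by linarith))
  · rw [← transferObjective_neg_log, ← transferObjective_const_mul]
    rfl

/-- MinEnt lower bound: the entropy regularizer minus the weighted source
cross-entropy, scaled by `η`, lower-bounds the approximated transferability
error over critics valued in `[0,1]^C`. -/
theorem stmt15 {Z : Type*} [MeasurableSpace Z] {C : ℕ}
    (μS : Measure (Z × (Fin C → ℝ))) [IsProbabilityMeasure μS]
    (μZT : Measure Z) [IsProbabilityMeasure μZT]
    (α : ℝ) (hα0 : 0 < α) (hα1 : α < 1) (hsm : α / ((C : ℝ) - 1) < 1)
    (g : Z → Fin C → ℝ) (hgm : Measurable g)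
    (hg : ∀ z c, α / ((C : ℝ) - 1) ≤ g z c ∧ g z c ≤ 1 - α)
    (w : Z → ℝ) (hwnn : ∀ z, 0 ≤ w z) (hwm : Measurable w)
    (hwnorm : ∫ p, w p.1 ∂μS = 1)
    (η : ℝ) (hη : η = -(Real.log (α / ((C : ℝ) - 1)))⁻¹)
    (hbdd : BddAbove {x : ℝ | ∃ f : Z → Fin C → ℝ, Measurable f ∧
        (∀ z c, f z c ∈ Set.Icc (0 : ℝ) 1) ∧
        x = (∫ z, ∑ c, g z c * f z c ∂μZT) -
            ∫ p, w p.1 * ∑ c, p.2 c * f p.1 c ∂μS}) :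
    η * ((∫ z, -∑ c, g z c * Real.log (g z c) ∂μZT) -
          ∫ p, -(w p.1) * ∑ c, p.2 c * Real.log (g p.1 c) ∂μS) ≤
      sSup {x : ℝ | ∃ f : Z → Fin C → ℝ, Measurable f ∧
        (∀ z c, f z c ∈ Set.Icc (0 : ℝ) 1) ∧
        x = (∫ z, ∑ c, g z c * f z c ∂μZT) -
            ∫ p, w p.1 * ∑ c, p.2 c * f p.1 c ∂μS} :=
  stmt15_general μS μZT α hα0 g hgm hg w η hη hbdd
end

section
/- Inductive design of weights and conditional invariance: let ψ : Z → Z' be measurable, p_S, p_T joint densities on Z with p_S > 0, Z' = ψ(Z), and w : Z' → ℝ₊. If w(z')·p_S(z) = p_T(z) holds for (almost) all z (where z' = ψ(z)), then: (i) w(z') = p_T(z')/p_S(z') for the induced marginals on Z', and (ii) the conditional distributions of Z given Z' agree across domains: p_S(z|z') = p_T(z|z'). -/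
/-!
Reweighting by a function of `ψ` commutes with pushing forward along `ψ`, which gives (i). For (ii),
disintegrate the joint law of `(ψ z, z)` under `μS` as `μS.map ψ ⊗ₘ κ`: multiplying it by a density
depending only on the first coordinate only reweights the marginal, so the joint law under `μT` is
`μT.map ψ ⊗ₘ κ`, and uniqueness of disintegrations identifies `κ` with the conditional distribution
under `μT`, almost everywhere for `μT.map ψ = (μS.map ψ).withDensity w`, i.e. where `w > 0`.
-/

open MeasureTheory ProbabilityTheory

open scoped ENNReal

section

variable {α β Ω : Type*} [MeasurableSpace α] [MeasurableSpace β] [MeasurableSpace Ω]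

lemma MeasureTheory.Measure.map_withDensity_comp (μ : Measure α) {g : α → β} (hg : Measurable g)
    {f : β → ℝ≥0∞} (hf : Measurable f) :
    (μ.withDensity fun a => f (g a)).map g = (μ.map g).withDensity f := by
  ext s hs
  rw [Measure.map_apply hg hs, withDensity_apply _ (hg hs), withDensity_apply _ hs,
    setLIntegral_map hs hf hg]

lemma MeasureTheory.Measure.withDensity_fst_compProd (ν : Measure α) [SFinite ν]
    (κ : Kernel α β) [IsSFiniteKernel κ] {f : α → ℝ≥0∞} (hf : Measurable f) :
    (ν ⊗ₘ κ).withDensity (fun p => f p.1) = ν.withDensity f ⊗ₘ κ := by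
  ext s hs
  have hslice :
      ∀ a, ∫⁻ b, s.indicator (fun p => f p.1) (a, b) ∂κ a = f a * κ a (Prod.mk a ⁻¹' s) := by
    intro a
    rw [← lintegral_indicator_const (measurable_prodMk_left hs)]
    rfl
  rw [withDensity_apply _ hs, Measure.compProd_apply hs,
    lintegral_withDensity_eq_lintegral_mul _ hf (Kernel.measurable_kernel_prodMk_left hs),
    ← lintegral_indicator hs, Measure.lintegral_compProd (f := s.indicator fun p => f p.1)
      ((hf.comp measurable_fst).indicator hs)]
  exact lintegral_congr hslice

lemma ProbabilityTheory.condDistrib_withDensity_comp_ae_eq [StandardBorelSpace Ω] [Nonempty Ω]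
    (μ : Measure α) [IsFiniteMeasure μ] {X : α → β} {Y : α → Ω} (hX : Measurable X)
    (hY : Measurable Y) {f : β → ℝ≥0∞} (hf : Measurable f)
    [IsFiniteMeasure (μ.withDensity fun a => f (X a))] :
    condDistrib Y X (μ.withDensity fun a => f (X a))
      =ᵐ[(μ.withDensity fun a => f (X a)).map X] condDistrib Y X μ := by
  refine condDistrib_ae_eq_of_measure_eq_compProd X hY.aemeasurable ?_
  calc (μ.withDensity fun a => f (X a)).map (fun a => (X a, Y a))
      = (μ.map fun a => (X a, Y a)).withDensity (fun p => f p.1) :=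
        μ.map_withDensity_comp (hX.prodMk hY) (hf.comp measurable_fst)
    _ = (μ.map X).withDensity f ⊗ₘ condDistrib Y X μ := by
        rw [← compProd_map_condDistrib hY.aemeasurable, Measure.withDensity_fst_compProd _ _ hf]
    _ = (μ.withDensity fun a => f (X a)).map X ⊗ₘ condDistrib Y X μ := by
        rw [μ.map_withDensity_comp hX hf]

end

/-- Inductive design of weights: if the target distribution of representations
is the source distribution reweighted by `w ∘ ψ`, then `w` is the density ratio
of the induced marginals on `Z'` and the conditional distributions of `Z`
given `Z' = ψ(Z)` agree across domains (where the weight is positive). -/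
theorem stmt16 {Z Z' : Type*} [MeasurableSpace Z] [MeasurableSpace Z']
    [StandardBorelSpace Z] [Nonempty Z]
    (ψ : Z → Z') (hψ : Measurable ψ)
    (μS μT : Measure Z) [IsProbabilityMeasure μS] [IsProbabilityMeasure μT]
    (w : Z' → ℝ) (hwm : Measurable w) (hwnn : ∀ z', 0 ≤ w z')
    (hrel : μT = μS.withDensity (fun z => ENNReal.ofReal (w (ψ z)))) :
    μT.map ψ = (μS.map ψ).withDensity (fun z' => ENNReal.ofReal (w z')) ∧
    ∀ᵐ z' ∂(μS.map ψ), w z' ≠ 0 →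
      condDistrib id ψ μS z' = condDistrib id ψ μT z' := by
  subst hrel
  have hf : Measurable fun z' => ENNReal.ofReal (w z') := hwm.ennreal_ofReal
  have hmarginal := μS.map_withDensity_comp hψ hf
  refine ⟨hmarginal, ?_⟩
  have hcond := condDistrib_withDensity_comp_ae_eq μS hψ measurable_id hf
  rw [hmarginal, Filter.EventuallyEq, ae_withDensity_iff hf] at hcond
  filter_upwards [hcond] with z' hz' hw
  exact (hz' (ENNReal.ofReal_pos.2 ((hwnn z').lt_of_ne' hw)).ne').symm
end
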